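/- For every natural number i ≥ 1, C(F(2i+2)·F(2i+3), F(2i)·F(2i+3)) = C(F(2i+2)·F(2i+3) − 1, F(2i)·F(2i+3) + 1), where F(n) denotes the n-th Fibonacci number. -/
import Mathlib

lemma cassini_odd (n : ℕ) :
    Nat.fib (2*n+1) * Nat.fib (2*n+1) = Nat.fib (2*n) * Nat.fib (2*n+2) + 1 := by
  induction n with
  | zero => simp
  | succ m ih =>
      have h1 : Nat.fib (2*m+2) = Nat.fib (2*m) + Nat.fib (2*m+1) := Nat.fib_add_two
      have h2 : Nat.fib (2*m+3) = Nat.fib (2*m+1) + Nat.fib (2*m+2) := Nat.fib_add_two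
      have h3 : Nat.fib (2*m+4) = Nat.fib (2*m+2) + Nat.fib (2*m+3) := Nat.fib_add_two
      have e1 : 2*(m+1)+1 = 2*m+3 := by ring
      have e2 : 2*(m+1) = 2*m+2 := by ring
      have e3 : 2*(m+1)+2 = 2*m+4 := by ring
      rw [e1, e2, show 2*m+2+2 = 2*m+4 by ring]
      nlinarith [ih, h1, h2, h3]

lemma choose_shift (k e : ℕ) (h : (e+2)*(e+1) = (k+e+2)*(k+1)) :
    Nat.choose (k+e+2) k = Nat.choose (k+e+1) (k+1) := by
  have h1 := Nat.choose_mul_factorial_mul_factorial (show k ≤ k+e+2 by omega)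
  have h2 := Nat.choose_mul_factorial_mul_factorial (show k+1 ≤ k+e+1 by omega)
  have s1 : k+e+2-k = e+2 := by omega
  have s2 : k+e+1-(k+1) = e := by omega
  rw [s1] at h1
  rw [s2] at h2
  have hf : (k+e+2).factorial = (k+e+2) * (k+e+1).factorial := Nat.factorial_succ _
  have key : Nat.choose (k+e+2) k * ((e+2)*(e+1) * (k.factorial * e.factorial)) =
      Nat.choose (k+e+1) (k+1) * ((e+2)*(e+1) * (k.factorial * e.factorial)) := by
    have hl : Nat.choose (k+e+2) k * ((e+2)*(e+1) * (k.factorial * e.factorial)) =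
        (k+e+2).factorial := by
      rw [← h1]
      have : (e+2).factorial = (e+2)*(e+1)*e.factorial := by
        rw [Nat.factorial_succ, Nat.factorial_succ]; ring
      rw [this]; ring
    have hr : Nat.choose (k+e+1) (k+1) * ((k+e+2)*(k+1) * (k.factorial * e.factorial)) =
        (k+e+2).factorial := by
      rw [hf, ← h2]
      have : (k+1).factorial = (k+1)*k.factorial := Nat.factorial_succ _
      rw [this]; ring
    rw [hl, h, hr]
  exact Nat.eq_of_mul_eq_mul_right (by positivity) key

theorem stmt13 (i : ℕ) (hi : 1 ≤ i) :
    Nat.choose (Nat.fib (2*i+2) * Nat.fib (2*i+3)) (Nat.fib (2*i) * Nat.fib (2*i+3)) =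
    Nat.choose (Nat.fib (2*i+2) * Nat.fib (2*i+3) - 1) (Nat.fib (2*i) * Nat.fib (2*i+3) + 1) := by
  set a := Nat.fib (2*i) with ha
  set b := Nat.fib (2*i+1) with hb
  have hc : Nat.fib (2*i+2) = a + b := Nat.fib_add_two
  have hd : Nat.fib (2*i+3) = b + (a + b) := by rw [Nat.fib_add_two, hc]
  have hcas : b * b = a * (a + b) + 1 := by
    have := cassini_odd i; rw [hc] at this; exact this
  have hb1 : 1 ≤ b := by
    rw [hb]; exact Nat.fib_pos.mpr (by omega)
  have ha1 : 1 ≤ a := by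
    rw [ha]; exact Nat.fib_pos.mpr (by omega)
  set d := b + (a + b) with hdd
  -- k = a*d, the big one is (a+b)*d = k + b*d, and b*d ≥ 2
  have hd2 : 2 ≤ d := by omega
  obtain ⟨e, he⟩ : ∃ e, b * d = e + 2 := by
    have := Nat.mul_le_mul hb1 hd2
    exact ⟨b*d - 2, by omega⟩
  have hcond : (e+2)*(e+1) = (a*d+e+2)*(a*d+1) := by
    have h4 : (e+2)*(e+1) + (e+2) = (b*d)*(b*d) := by rw [he]; ring
    have hmain : (b*d)*(b*d) = ((a+b)*d)*(a*d+1) + b*d := by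
      rw [hdd]
      zify
      zify at hcas
      linear_combination ((b:ℤ)+((a:ℤ)+(b:ℤ)))^2 * hcas
    have hab : a*d+e+2 = (a+b)*d := by rw [add_mul]; omega
    rw [hab]
    linarith [h4, hmain, he]
  have key : Nat.choose (a*d + e + 2) (a*d) = Nat.choose (a*d + e + 1) (a*d + 1) :=
    choose_shift (a*d) e hcond
  rw [hd, hc]
  have h1 : (a+b)*d = a*d+e+2 := by have := add_mul a b d; omega
  rw [h1, show a*d+e+2-1 = a*d+e+1 by omega]
  exact key
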